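/- Let μ be a nonzero finite Borel measure on ℝ^d with compact support, and let q₁ ∈ L^∞(μ⊗μ; ℝ^d) satisfy q₁(x,y) = −q₁(y,x) for μ-a.e. x,y. Then λ₁(μ) ≤ μ(ℝ^d)^{-1} · esssup_{x,y∼μ} | q₁(x,y) + x − y − ⨍ q₁(x,z) dμ(z) + ⨍ q₁(y,z) dμ(z) |. -/

import Mathlib

/-!
The constant map `u ≡ c := ⨍ x dμ` minimizes `J_{μ,λ}` for `λ = M / μ(ℝ^d)`, where `M` is the
essential supremum in the statement. The kernel
`F(x,y) = q₁(x,y) + x - y - ⨍ q₁(x,·) + ⨍ q₁(y,·)` is antisymmetric, and since antisymmetry of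
`q₁` makes `x ↦ ⨍ q₁(x,·)` have mean zero, `∫ F(x,y) dμ(y) = μ(ℝ^d) (x - c)`. Hence for every
`v ∈ L²(μ)`, symmetrizing in `(x,y)` gives
`2 μ(ℝ^d) ∫ ⟪x - c, v x⟫ = ∬ ⟪F(x,y), v x - v y⟫ ≤ M ∬ |v x - v y|`,
while expanding squares around the mean gives `∫ |c - x|² ≤ ∫ |v x - x|² + 2 ∫ ⟪x - c, v x⟫`.
Together these say `J_{μ,λ}(c) ≤ J_{μ,λ}(v)`.
-/

open MeasureTheory Filter Topology ProbabilityTheory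
open scoped ENNReal NNReal symmDiff Classical RealInnerProductSpace

noncomputable section

/-- `d`-dimensional Euclidean space. -/
abbrev Euc (d : ℕ) : Type := EuclideanSpace ℝ (Fin d)

/-- The sum-of-norms clustering functional
`J_{μ,λ}(u) = ∫ |u x - x|² dμ + λ ∬ |u x - u y| dμ dμ`. -/
def SONJ {d : ℕ} (μ : Measure (Euc d)) (lam : ℝ) (u : Euc d → Euc d) : ℝ :=
  ∫ x, ‖u x - x‖ ^ 2 ∂μ + lam * ∫ x, ∫ y, ‖u x - u y‖ ∂μ ∂μ

/-- `u` is a minimizer of `J_{μ,λ}` over `L²(μ; ℝ^d)`.  Since `J_{μ,λ}` has a unique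
minimizer (up to `μ`-a.e. equality), this predicate characterizes `u_{μ,λ}`. -/
def IsSONMin {d : ℕ} (μ : Measure (Euc d)) (lam : ℝ) (u : Euc d → Euc d) : Prop :=
  MemLp u 2 μ ∧ ∀ v : Euc d → Euc d, MemLp v 2 μ → SONJ μ lam u ≤ SONJ μ lam v

/-- `μ` is `λ`-cohesive: the minimizer of `J_{μ,λ}` is `μ`-a.e. constant. -/
def Cohesive {d : ℕ} (μ : Measure (Euc d)) (lam : ℝ) : Prop :=
  ∃ u : Euc d → Euc d, IsSONMin μ lam u ∧ ∃ c : Euc d, u =ᵐ[μ] fun _ => c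

/-- `μ` is `λ`-shattered: the minimizer of `J_{μ,λ}` agrees `μ`-a.e. with a measurable
injection. -/
def Shattered {d : ℕ} (μ : Measure (Euc d)) (lam : ℝ) : Prop :=
  ∃ u : Euc d → Euc d, IsSONMin μ lam u ∧
    ∃ v : Euc d → Euc d, Measurable v ∧ Function.Injective v ∧ u =ᵐ[μ] v

/-- `λ₁(μ) = inf {λ ≥ 0 | μ is λ-cohesive}`. -/
def lambda1 {d : ℕ} (μ : Measure (Euc d)) : ℝ :=
  sInf {lam : ℝ | 0 ≤ lam ∧ Cohesive μ lam}

/-- `λ⋆(μ) = sup {λ ≥ 0 | μ is λ-shattered}`. -/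
def lambdaStar {d : ℕ} (μ : Measure (Euc d)) : ℝ :=
  sSup {lam : ℝ | 0 ≤ lam ∧ Shattered μ lam}

/-- The level set (cluster) of `u` containing `x`: `V_{u,x} = u⁻¹({u x})`. -/
def Vset {d : ℕ} (u : Euc d → Euc d) (x : Euc d) : Set (Euc d) := {y | u y = u x}

/-- The `μ`-centroid of a set `V`: the `μ`-average of `V` if `μ V > 0`, and the unique
element of `V` if `V` is a singleton (otherwise junk). -/
def muCentroid {d : ℕ} (μ : Measure (Euc d)) (V : Set (Euc d)) : Euc d :=
  if 0 < μ V then (μ V).toReal⁻¹ • ∫ x in V, x ∂μ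
  else if h : ∃ x, V = {x} then h.choose else 0

/-- The first canonical basis vector of `ℝ^d`. -/
def e1 (d : ℕ) : Euc d := if h : 0 < d then EuclideanSpace.single (⟨0, h⟩ : Fin d) 1 else 0

/-- The constant `γ_d` from the paper. -/
def gammaD (d : ℕ) : ℝ :=
  ((2 * (d : ℝ) + 1) / (2 * (d : ℝ) + 4)) *
    (if Even d then
      (((d : ℝ) + 1) * ((Nat.factorial (2 * d) : ℝ)) * Real.pi) /
        (2 ^ (3 * d) * ((Nat.factorial (d / 2) : ℝ)) ^ 2 * ((Nat.factorial d : ℝ)))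
    else
      (((d : ℝ) + 1) * ((Nat.factorial ((d - 1) / 2) : ℝ)) ^ 2 *
          ((Nat.factorial (2 * d) : ℝ))) /
        (2 ^ d * ((Nat.factorial d : ℝ)) ^ 3))

/-- The union of the two open unit balls centered at `± r e₁`. -/
def ballUnion (d : ℕ) (r : ℝ) : Set (Euc d) :=
  Metric.ball (-(r • e1 d)) 1 ∪ Metric.ball (r • e1 d) 1

/-- The empirical measure `μ_N = N⁻¹ ∑_{n<N} δ_{X n ω}`. -/
def empMeas {d : ℕ} {Ω : Type*} (X : ℕ → Ω → Euc d) (N : ℕ) (ω : Ω) : Measure (Euc d) :=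
  (N : ℝ≥0∞)⁻¹ • ∑ n ∈ Finset.range N, Measure.dirac (X n ω)

section Essential

variable {α E : Type*} [MeasurableSpace α] {μ : Measure α} [NormedAddCommGroup E]

theorem MeasureTheory.MemLp.ae_norm_le_toReal_eLpNorm_top {f : α → E} (hf : MemLp f ∞ μ) :
    ∀ᵐ x ∂μ, ‖f x‖ ≤ (eLpNorm f ∞ μ).toReal := by
  filter_upwards [ae_le_eLpNormEssSup (f := f) (μ := μ)] with x hx
  rw [← eLpNorm_exponent_top] at hx
  simpa using ENNReal.toReal_mono hf.2.ne hx

theorem MeasureTheory.MemLp.ae_norm_le_essSup {f : α → E} (hf : MemLp f ∞ μ) :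
    ∀ᵐ x ∂μ, ‖f x‖ ≤ essSup (fun x => ‖f x‖) μ :=
  ae_le_essSup ⟨_, hf.ae_norm_le_toReal_eLpNorm_top⟩

theorem memLp_top_id_of_isCompact [MeasurableSpace E] [OpensMeasurableSpace E]
    [SecondCountableTopology E] {μ : Measure E} {K : Set E} (hK : IsCompact K) (hμK : μ Kᶜ = 0) :
    MemLp (fun x => x) ∞ μ := by
  obtain ⟨R, hR⟩ := hK.isBounded.exists_norm_le
  exact memLp_top_of_bound aestronglyMeasurable_id R (measure_eq_zero_iff_ae_notMem.1 hμK |>.mono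
    fun x hx => hR x (by simpa using hx))

end Essential

section Average

variable {α β E : Type*} [MeasurableSpace α] [MeasurableSpace β] {μ : Measure α} {ν : Measure β}
  [NormedAddCommGroup E] [NormedSpace ℝ E]

theorem norm_average_le_of_ae_norm_le [IsFiniteMeasure μ] {f : α → E} {C : ℝ} (hC : 0 ≤ C)
    (h : ∀ᵐ x ∂μ, ‖f x‖ ≤ C) : ‖⨍ x, f x ∂μ‖ ≤ C := by
  rw [average_eq, norm_smul, norm_inv, Real.norm_of_nonneg measureReal_nonneg]
  rcases measureReal_nonneg.eq_or_lt with h0 | hpos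
  · rwa [← h0, inv_zero, zero_mul]
  · rw [inv_mul_le_iff₀ hpos, mul_comm]
    exact norm_integral_le_of_norm_le_const h

theorem MeasureTheory.MemLp.average_prod_right [SFinite μ] [IsFiniteMeasure ν] {q : α → β → E}
    (hq : MemLp (fun p : α × β => q p.1 p.2) ∞ (μ.prod ν)) :
    MemLp (fun x => ⨍ y, q x y ∂ν) ∞ μ := by
  refine memLp_top_of_bound ?_ _ ((Measure.ae_ae_of_ae_prod
    hq.ae_norm_le_toReal_eLpNorm_top).mono fun x hx => norm_average_le_of_ae_norm_le
      ENNReal.toReal_nonneg hx)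
  simp_rw [average_eq]
  exact hq.1.integral_prod_right'.const_smul _

theorem integral_prod_eq_zero_of_antisymm [SFinite μ] {F : α × α → E}
    (hanti : ∀ᵐ p ∂μ.prod μ, F p = -F p.swap) : ∫ p, F p ∂μ.prod μ = 0 := by
  have : IsAddTorsionFree E := .of_isTorsionFree ℝ E
  refine self_eq_neg.mp ?_
  calc ∫ p, F p ∂μ.prod μ = ∫ p, -F p.swap ∂μ.prod μ := integral_congr_ae hanti
    _ = -∫ p, F p ∂μ.prod μ := by rw [integral_neg, integral_prod_swap F]

theorem integral_average_eq_zero_of_antisymm [IsFiniteMeasure μ] {q : α → α → E}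
    (hq : Integrable (fun p : α × α => q p.1 p.2) (μ.prod μ))
    (hanti : ∀ᵐ p ∂μ.prod μ, q p.1 p.2 = -q p.2 p.1) :
    ∫ x, ⨍ y, q x y ∂μ ∂μ = 0 := by
  simp_rw [average_eq]
  rw [integral_smul, ← integral_prod _ hq, integral_prod_eq_zero_of_antisymm hanti, smul_zero]

end Average

section Inner

variable {α E : Type*} [MeasurableSpace α] {μ : Measure α}
  [NormedAddCommGroup E] [InnerProductSpace ℝ E]

theorem MeasureTheory.MemLp.integrable_inner {f g : α → E} (hf : MemLp f 2 μ)
    (hg : MemLp g 2 μ) : Integrable (fun x => ⟪f x, g x⟫) μ :=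
  (L2.integrable_inner (𝕜 := ℝ) (hf.toLp f) (hg.toLp g)).congr <| by
    filter_upwards [hf.coeFn_toLp, hg.coeFn_toLp] with x hfx hgx
    rw [hfx, hgx]

theorem MeasureTheory.Integrable.inner_of_ae_norm_le {F v : α → E} {M : ℝ}
    (hF : AEStronglyMeasurable F μ) (hFM : ∀ᵐ x ∂μ, ‖F x‖ ≤ M) (hv : Integrable v μ) :
    Integrable (fun x => ⟪F x, v x⟫) μ := by
  refine (hv.norm.const_mul M).mono' (hF.inner hv.1) ?_
  filter_upwards [hFM] with x hx
  exact (norm_inner_le_norm _ _).trans (mul_le_mul_of_nonneg_right hx (norm_nonneg _))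

theorem integral_inner_snd_eq_neg_of_antisymm [SFinite μ] {F : α × α → E}
    (hanti : ∀ᵐ p ∂μ.prod μ, F p = -F p.swap) (w : α → E) :
    ∫ p, ⟪F p, w p.2⟫ ∂μ.prod μ = -∫ p, ⟪F p, w p.1⟫ ∂μ.prod μ := by
  calc ∫ p, ⟪F p, w p.2⟫ ∂μ.prod μ = ∫ p, ⟪F p.swap, w p.1⟫ ∂μ.prod μ :=
        (integral_prod_swap fun p => ⟪F p, w p.2⟫).symm
    _ = ∫ p, -⟪F p, w p.1⟫ ∂μ.prod μ :=
        integral_congr_ae <| hanti.mono fun p hp => by beta_reduce; rw [hp, inner_neg_left, neg_neg]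
    _ = _ := integral_neg _

theorem two_mul_integral_inner_le_of_antisymm [CompleteSpace E] [IsFiniteMeasure μ]
    {F : α × α → E} {g v : α → E} {M : ℝ} (hF : AEStronglyMeasurable F (μ.prod μ))
    (hFM : ∀ᵐ p ∂μ.prod μ, ‖F p‖ ≤ M) (hanti : ∀ᵐ p ∂μ.prod μ, F p = -F p.swap)
    (hg : ∀ᵐ x ∂μ, ∫ y, F (x, y) ∂μ = g x) (hv : Integrable v μ) :
    2 * ∫ x, ⟪g x, v x⟫ ∂μ ≤ M * ∫ x, ∫ y, ‖v x - v y‖ ∂μ ∂μ := by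
  have hv₁ : Integrable (fun p : α × α => v p.1) (μ.prod μ) := hv.comp_fst μ
  have hv₂ : Integrable (fun p : α × α => v p.2) (μ.prod μ) := hv.comp_snd μ
  have hi₁ := hv₁.inner_of_ae_norm_le hF hFM
  have hi₂ := hv₂.inner_of_ae_norm_le hF hFM
  have hΔ : Integrable (fun p : α × α => ‖v p.1 - v p.2‖) (μ.prod μ) := (hv₁.sub hv₂).norm
  have hFi : Integrable F (μ.prod μ) := (integrable_const M).mono' hF hFM
  have hfubini : ∫ x, ⟪g x, v x⟫ ∂μ = ∫ p, ⟪F p, v p.1⟫ ∂μ.prod μ := by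
    rw [integral_prod _ hi₁]
    refine integral_congr_ae ?_
    filter_upwards [hg, hFi.prod_right_ae] with x hx hFx
    simp_rw [← hx, real_inner_comm (v x), integral_inner hFx]
  calc 2 * ∫ x, ⟪g x, v x⟫ ∂μ
      = ∫ p, ⟪F p, v p.1⟫ ∂μ.prod μ - ∫ p, ⟪F p, v p.2⟫ ∂μ.prod μ := by
        rw [hfubini, integral_inner_snd_eq_neg_of_antisymm hanti]
        ring
    _ = ∫ p, ⟪F p, v p.1 - v p.2⟫ ∂μ.prod μ := by
        rw [← integral_sub hi₁ hi₂]
        exact integral_congr_ae (ae_of_all _ fun p => (inner_sub_right _ _ _).symm)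
    _ ≤ ∫ p, M * ‖v p.1 - v p.2‖ ∂μ.prod μ := by
        refine integral_mono_ae ((hv₁.sub hv₂).inner_of_ae_norm_le hF hFM) (hΔ.const_mul M) ?_
        filter_upwards [hFM] with p hp
        exact (real_inner_le_norm _ _).trans (mul_le_mul_of_nonneg_right hp (norm_nonneg _))
    _ = M * ∫ x, ∫ y, ‖v x - v y‖ ∂μ ∂μ := by
        rw [integral_const_mul, integral_prod _ hΔ]

theorem norm_sub_sq_add_two_inner_eq (a x c : E) :
    ‖a - x‖ ^ 2 + 2 * ⟪x - c, a⟫ = ‖c - x‖ ^ 2 + ‖a - c‖ ^ 2 + 2 * ⟪x - c, c⟫ := by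
  rw [norm_sub_sq_real, norm_sub_sq_real, norm_sub_sq_real, inner_sub_left, inner_sub_left,
    real_inner_comm c a, real_inner_comm x a, real_inner_comm c x, real_inner_self_eq_norm_sq]
  ring

theorem integral_norm_average_sub_sq_le [CompleteSpace E] [IsFiniteMeasure μ] {f v : α → E}
    (hf : MemLp f 2 μ) (hv : MemLp v 2 μ) :
    ∫ x, ‖⨍ y, f y ∂μ - f x‖ ^ 2 ∂μ
      ≤ ∫ x, ‖v x - f x‖ ^ 2 ∂μ + 2 * ∫ x, ⟪f x - ⨍ y, f y ∂μ, v x⟫ ∂μ := by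
  set c := ⨍ y, f y ∂μ
  have hc : MemLp (fun _ => c) 2 μ := memLp_const c
  have hsq : ∀ {g : α → E}, MemLp g 2 μ → Integrable (fun x => ‖g x‖ ^ 2) μ :=
    fun hg => (memLp_two_iff_integrable_sq_norm hg.1).1 hg
  have hcf : Integrable (fun x => ‖c - f x‖ ^ 2) μ := hsq (hc.sub hf)
  have hvc : Integrable (fun x => ‖v x - c‖ ^ 2) μ := hsq (hv.sub hc)
  have hvf : Integrable (fun x => ‖v x - f x‖ ^ 2) μ := hsq (hv.sub hf)
  have hfcc : Integrable (fun x => 2 * ⟪f x - c, c⟫) μ :=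
    ((hf.sub hc).integrable_inner hc).const_mul 2
  have hfcv : Integrable (fun x => 2 * ⟪f x - c, v x⟫) μ :=
    ((hf.sub hc).integrable_inner hv).const_mul 2
  have hcentered : ∫ x, ⟪f x - c, c⟫ ∂μ = 0 := by
    simp_rw [real_inner_comm c]
    rw [integral_inner (f := fun x => f x - c) ((hf.sub hc).integrable one_le_two),
      integral_sub_average, inner_zero_right]
  have hvc₀ : 0 ≤ ∫ x, ‖v x - c‖ ^ 2 ∂μ := integral_nonneg fun x => by positivity
  calc ∫ x, ‖c - f x‖ ^ 2 ∂μ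
      ≤ ∫ x, ‖c - f x‖ ^ 2 ∂μ + ∫ x, ‖v x - c‖ ^ 2 ∂μ + 2 * ∫ x, ⟪f x - c, c⟫ ∂μ := by
        rw [hcentered]
        linarith
    _ = ∫ x, (‖c - f x‖ ^ 2 + ‖v x - c‖ ^ 2 + 2 * ⟪f x - c, c⟫) ∂μ := by
        rw [integral_add (f := fun x => ‖c - f x‖ ^ 2 + ‖v x - c‖ ^ 2) (hcf.add hvc) hfcc,
           integral_add hcf hvc, integral_const_mul]
    _ = ∫ x, (‖v x - f x‖ ^ 2 + 2 * ⟪f x - c, v x⟫) ∂μ := by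
        simp_rw [norm_sub_sq_add_two_inner_eq]
    _ = ∫ x, ‖v x - f x‖ ^ 2 ∂μ + 2 * ∫ x, ⟪f x - c, v x⟫ ∂μ := by
        rw [integral_add hvf hfcv, integral_const_mul]

end Inner

section DualKernel

variable {E : Type*} [NormedAddCommGroup E] [NormedSpace ℝ E] [MeasurableSpace E]
  {μ : Measure E}

def dualKernel (μ : Measure E) (q : E → E → E) (x y : E) : E :=
  q x y + x - y - ⨍ z, q x z ∂μ + ⨍ z, q y z ∂μ

theorem dualKernel_eq_neg_swap {q : E → E → E} {x y : E} (h : q x y = -q y x) :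
    dualKernel μ q x y = -dualKernel μ q y x := by
  rw [dualKernel, dualKernel, h]
  abel

theorem memLp_top_dualKernel [IsFiniteMeasure μ] {q : E → E → E}
    (hq : MemLp (fun p : E × E => q p.1 p.2) ∞ (μ.prod μ)) (hid : MemLp (fun x => x) ∞ μ) :
    MemLp (fun p : E × E => dualKernel μ q p.1 p.2) ∞ (μ.prod μ) :=
  have hQ := hq.average_prod_right
  (((hq.add (hid.comp_fst μ)).sub (hid.comp_snd μ)).sub (hQ.comp_fst μ)).add (hQ.comp_snd μ)

theorem ae_integral_dualKernel_eq [CompleteSpace E] [IsFiniteMeasure μ] {q : E → E → E}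
    (hq : Integrable (fun p : E × E => q p.1 p.2) (μ.prod μ))
    (hanti : ∀ᵐ p ∂μ.prod μ, q p.1 p.2 = -q p.2 p.1) (hid : Integrable (fun x => x) μ) :
    ∀ᵐ x ∂μ, ∫ y, dualKernel μ q x y ∂μ = μ.real Set.univ • (x - ⨍ y, y ∂μ) := by
  have hQ : Integrable (fun y => ⨍ z, q y z ∂μ) μ := by
    simp_rw [average_eq]
    exact hq.integral_prod_left.smul _
  filter_upwards [hq.prod_right_ae] with x hx
  have h₁ : Integrable (fun y => q x y + x) μ := hx.add (integrable_const x)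
  have h₂ : Integrable (fun y => q x y + x - y) μ := h₁.sub hid
  have h₃ : Integrable (fun y => q x y + x - y - ⨍ z, q x z ∂μ) μ := h₂.sub (integrable_const _)
  unfold dualKernel
  rw [integral_add h₃ hQ, integral_sub h₂ (integrable_const _), integral_sub h₁ hid,
    integral_add hx (integrable_const x), integral_average_eq_zero_of_antisymm hq hanti,
    integral_const, integral_const, ← measure_smul_average μ (fun y => q x y),
    ← measure_smul_average μ (fun y : E => y), smul_sub]
  abel

end DualKernel

theorem lambda1_le_of_cohesive {d : ℕ} {μ : Measure (Euc d)} {lam : ℝ} (hlam : 0 ≤ lam)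
    (h : Cohesive μ lam) : lambda1 μ ≤ lam :=
  csInf_le ⟨0, fun _ hl => hl.1⟩ ⟨hlam, h⟩

theorem isSONMin_const_average {d : ℕ} {μ : Measure (Euc d)} [IsFiniteMeasure μ] {lam : ℝ}
    (hid : MemLp (fun x => x) 2 μ)
    (h : ∀ v, MemLp v 2 μ →
      2 * ∫ x, ⟪x - ⨍ y, y ∂μ, v x⟫ ∂μ ≤ lam * ∫ x, ∫ y, ‖v x - v y‖ ∂μ ∂μ) :
    IsSONMin μ lam (fun _ => ⨍ y, y ∂μ) := by
  refine ⟨memLp_const _, fun v hv => ?_⟩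
  calc SONJ μ lam (fun _ => ⨍ y, y ∂μ) = ∫ x, ‖⨍ y, y ∂μ - x‖ ^ 2 ∂μ := by simp [SONJ]
    _ ≤ ∫ x, ‖v x - x‖ ^ 2 ∂μ + 2 * ∫ x, ⟪x - ⨍ y, y ∂μ, v x⟫ ∂μ :=
        integral_norm_average_sub_sq_le hid hv
    _ ≤ SONJ μ lam v := add_le_add_right (h v hv) _

/-- **Proposition (approximate dual feasibility bound).**  For any `μ⊗μ`-a.e.
antisymmetric `q₁ ∈ L^∞(μ⊗μ;ℝ^d)`,
`λ₁(μ) ≤ μ(ℝ^d)⁻¹ esssup_{x,y∼μ} |q₁(x,y) + x - y - ⨍ q₁(x,z)dμ(z) + ⨍ q₁(y,z)dμ(z)|`. -/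
theorem stmt11
    (d : ℕ) (μ : Measure (Euc d)) [IsFiniteMeasure μ] (hμ0 : μ ≠ 0)
    (hsupp : ∃ K : Set (Euc d), IsCompact K ∧ μ Kᶜ = 0)
    (q₁ : Euc d → Euc d → Euc d)
    (hq : MemLp (fun p : Euc d × Euc d => q₁ p.1 p.2) ⊤ (μ.prod μ))
    (hanti : ∀ᵐ p ∂μ.prod μ, q₁ p.1 p.2 = -q₁ p.2 p.1) :
    lambda1 μ ≤ (μ Set.univ).toReal⁻¹ *
      essSup (fun p : Euc d × Euc d =>
        ‖q₁ p.1 p.2 + p.1 - p.2 - ⨍ z, q₁ p.1 z ∂μ + ⨍ z, q₁ p.2 z ∂μ‖) (μ.prod μ) := by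
  obtain ⟨K, hK, hKc⟩ := hsupp
  have hid : MemLp (fun x : Euc d => x) ∞ μ := memLp_top_id_of_isCompact hK hKc
  have hF := memLp_top_dualKernel hq hid
  have hFM := hF.ae_norm_le_essSup
  change lambda1 μ ≤ (μ.real Set.univ)⁻¹ * essSup (fun p => ‖dualKernel μ q₁ p.1 p.2‖) (μ.prod μ)
  set M := essSup (fun p : Euc d × Euc d => ‖dualKernel μ q₁ p.1 p.2‖) (μ.prod μ)
  have : NeZero μ := ⟨hμ0⟩
  have hm : 0 < μ.real Set.univ := measureReal_univ_pos
  have hM : 0 ≤ M := by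
    obtain ⟨x, hx⟩ := (Measure.ae_ae_of_ae_prod hFM).exists
    obtain ⟨y, hy⟩ := hx.exists
    exact (norm_nonneg _).trans hy
  refine lambda1_le_of_cohesive (by positivity)
    ⟨_, isSONMin_const_average (hid.mono_exponent le_top) fun v hv => ?_, _, .rfl⟩
  have hdual := two_mul_integral_inner_le_of_antisymm hF.1 hFM
    (hanti.mono fun p hp => dualKernel_eq_neg_swap hp)
    (ae_integral_dualKernel_eq (hq.integrable le_top) hanti (hid.integrable le_top))
    (hv.integrable one_le_two)
  simp_rw [real_inner_smul_left, integral_const_mul] at hdual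
  rw [mul_assoc, le_inv_mul_iff₀ hm]
  linarith
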